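/- Let n ≥ 1 and let V ⊆ ℂⁿ ⊕ ℂⁿ be a maximal isotropic subspace (isotropic of dimension n for B). Then the joint kernel {w ∈ Λ(ℂⁿ) : d_{(β,γ)} w = 0 for every (β,γ) ∈ V} is a one-dimensional ℂ-vector subspace of Λ(ℂⁿ). -/

import Mathlib

open Matrix

noncomputable section

/-- The symmetric bilinear form `B((β,γ),(β',γ')) = Σ_t (β_t γ'_t + β'_t γ_t)` on `ℂⁿ ⊕ ℂⁿ`. -/
def Bform (n : ℕ) (p q : (Fin n → ℂ) × (Fin n → ℂ)) : ℂ :=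
  ∑ t, (p.1 t * q.2 t + q.1 t * p.2 t)

/-- The Grassmann (exterior) algebra `Λ(ℂⁿ)` on `n` generators. -/
abbrev GA (n : ℕ) := ExteriorAlgebra ℂ (Fin n → ℂ)

/-- `x_t` : left exterior multiplication by the `t`-th standard basis vector `e_t`. -/
noncomputable def Xop (n : ℕ) (t : Fin n) : GA n →ₗ[ℂ] GA n :=
  LinearMap.mulLeft ℂ (ExteriorAlgebra.ι ℂ (Pi.single t 1))

/-- `∂_t` : left interior multiplication (contraction) with the `t`-th dual basis vector. -/
noncomputable def Dop (n : ℕ) (t : Fin n) : GA n →ₗ[ℂ] GA n :=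
  CliffordAlgebra.contractLeft (LinearMap.proj t)

/-- The operator `d_{(β,γ)} = Σ_t (β_t ∂_t + γ_t x_t)` on `Λ(ℂⁿ)`. -/
noncomputable def dOp (n : ℕ) (p : (Fin n → ℂ) × (Fin n → ℂ)) : GA n →ₗ[ℂ] GA n :=
  ∑ t, (p.1 t • Dop n t + p.2 t • Xop n t)

/-!
The operators obey the canonical anticommutation relations
`d_p d_q + d_q d_p = B(p, q)`. As `B` is nondegenerate, a basis `v` of `V` has a `B`-dual family
`u`, so `a_i = d_{v_i}` and `b_i = d_{u_i}` satisfy `a_i² = 0`, `a_i a_j = -a_j a_i` and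
`a_i b_j + b_j a_i = δ_ij`. On the joint kernel `W` of `a_1, …, a_{k-1}` (which `a_k`, `b_k`
preserve), `W ∩ ker a_k = a_k W` because `x = a_k (b_k x)` for `x ∈ ker a_k`, so `a_k` halves
`dim W`.
Hence `dim Λ(ℂⁿ) = 2ⁿ · dim ⋂ᵢ ker a_i`, and `dim Λ(ℂⁿ) = 2ⁿ` leaves a line.
-/

open Module LinearMap

section Anticommuting

variable {K M : Type*} [DivisionRing K] [AddCommGroup M] [Module K M]

theorem two_mul_finrank_inf_ker [FiniteDimensional K M] {a b : Module.End K M}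
    {W : Submodule K M} (haW : ∀ x ∈ W, a x ∈ W) (hbW : ∀ x ∈ W, b x ∈ W)
    (ha : a * a = 0) (hab : a * b + b * a = 1) :
    2 * finrank K ↥(W ⊓ ker a) = finrank K W := by
  have hmap : W.map a = W ⊓ ker a := by
    refine le_antisymm ?_ fun x ⟨hxW, hxa⟩ => ⟨b x, hbW x hxW, ?_⟩
    · rintro _ ⟨x, hx, rfl⟩
      exact ⟨haW x hx, by simpa using congr($ha x)⟩
    · simpa [mem_ker.1 hxa] using congr($hab x)
  have hker : finrank K ↥(ker (a.domRestrict W)) = finrank K ↥(W ⊓ ker a) := by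
    rw [ker_domRestrict, ← Submodule.map_comap_subtype, Submodule.finrank_map_subtype_eq]
  have := finrank_range_add_finrank_ker (a.domRestrict W)
  rw [range_domRestrict, hmap, hker] at this
  omega

variable {ι : Type*} {a b : ι → Module.End K M}

theorem apply_mem_iInf_ker_of_anticomm {s : Finset ι} {c : Module.End K M}
    (hc : ∀ j ∈ s, a j * c + c * a j = 0) {x : M} (hx : x ∈ ⨅ j ∈ s, ker (a j)) :
    c x ∈ ⨅ j ∈ s, ker (a j) := by
  simp only [Submodule.mem_iInf, mem_ker] at hx ⊢
  intro j hj
  simpa [hx j hj] using congr($(hc j hj) x)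

theorem finrank_eq_two_pow_mul_finrank_iInf_ker [FiniteDimensional K M] [Fintype ι]
    [DecidableEq ι] (ha : ∀ i, a i * a i = 0)
    (ha_anti : Pairwise fun i j => a i * a j + a j * a i = 0)
    (hab : ∀ i j, a i * b j + b j * a i = if i = j then 1 else 0) :
    finrank K M = 2 ^ Fintype.card ι * finrank K ↥(⨅ i, ker (a i)) := by
  suffices ∀ s : Finset ι, finrank K M = 2 ^ s.card * finrank K ↥(⨅ i ∈ s, ker (a i)) by
    rw [this Finset.univ, Finset.card_univ,
      show ⨅ i ∈ Finset.univ, ker (a i) = ⨅ i, ker (a i) by simp]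
  intro s
  induction s using Finset.induction_on with
  | empty => rw [show ⨅ i ∈ (∅ : Finset ι), ker (a i) = ⊤ by simp, finrank_top]; simp
  | @insert i s hi ih =>
    have hne : ∀ j ∈ s, j ≠ i := fun j hj h => hi (h ▸ hj)
    have hhalf := two_mul_finrank_inf_ker (W := ⨅ j ∈ s, ker (a j))
      (fun x => apply_mem_iInf_ker_of_anticomm fun j hj => ha_anti (hne j hj))
      (fun x => apply_mem_iInf_ker_of_anticomm fun j hj => by simpa [hne j hj] using hab j i)
      (ha i) (by simpa using hab i i)
    rw [Finset.iInf_insert, inf_comm, Finset.card_insert_of_notMem hi, ih, ← hhalf]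
    ring

end Anticommuting

theorem Submodule.iInf_ker_eq_iInf_ker_basis {R E N ι : Type*} [CommRing R] [AddCommGroup E]
    [Module R E] [AddCommGroup N] [Module R N] (D : E →ₗ[R] Module.End R N)
    {V : Submodule R E} (b : Basis ι R V) :
    ⨅ p ∈ V, ker (D p) = ⨅ i, ker (D (b i)) := by
  refine le_antisymm (le_iInf fun i => iInf₂_le _ (b i).2) fun x hx => ?_
  have hV : V ≤ ker (applyₗ x ∘ₗ D) := by
    rw [← V.map_subtype_top, ← b.span_eq, ← Submodule.span_image, ← Set.range_comp,
      Submodule.span_le]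
    rintro _ ⟨i, rfl⟩
    exact (Submodule.mem_iInf _).1 hx i
  simp only [Submodule.mem_iInf]
  exact fun p hp => hV hp

namespace ExteriorAlgebra

section SpinorRep

variable {R M : Type*} [CommRing R] [AddCommGroup M] [Module R M]

/-- `(f, a)` acts on `Λ M` by contraction with `f` plus left multiplication by `a`: the spinor
representation of the Clifford algebra of `M* × M` with quadratic form `(f, a) ↦ f a`. -/
def spinorRep : Module.Dual R M × M →ₗ[R] Module.End R (ExteriorAlgebra R M) :=
  CliffordAlgebra.contractLeft ∘ₗ fst R _ _ +
    (LinearMap.mul R (ExteriorAlgebra R M) ∘ₗ ι R) ∘ₗ snd R _ _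

theorem spinorRep_apply (x : Module.Dual R M × M) (y : ExteriorAlgebra R M) :
    spinorRep x y = CliffordAlgebra.contractLeft x.1 y + ι R x.2 * y := by
  simp [spinorRep]

theorem spinorRep_mul_self (x : Module.Dual R M × M) :
    spinorRep x * spinorRep x = x.1 x.2 • 1 := by
  refine LinearMap.ext fun y => ?_
  simp only [Module.End.mul_apply, spinorRep_apply, map_add,
    CliffordAlgebra.contractLeft_contractLeft, CliffordAlgebra.contractLeft_ι_mul, ← mul_assoc,
    ι_sq_zero, zero_mul, zero_add, add_zero, LinearMap.smul_apply, Module.End.one_apply]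
  abel

theorem spinorRep_mul_add_mul_swap (x y : Module.Dual R M × M) :
    spinorRep x * spinorRep y + spinorRep y * spinorRep x = (x.1 y.2 + y.1 x.2) • 1 := by
  have h := spinorRep_mul_self (x + y)
  simp only [map_add, add_mul, mul_add, spinorRep_mul_self, Prod.fst_add, Prod.snd_add,
    LinearMap.add_apply, add_smul] at h
  rw [add_smul]
  refine add_left_cancel (a := x.1 x.2 • (1 : Module.End R _) + y.1 y.2 • 1) ?_
  convert h using 1 <;> abel

end SpinorRep

section Finrank

variable {K M : Type*} [Field K] [AddCommGroup M] [Module K M] [FiniteDimensional K M]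

instance instFiniteDimensional : FiniteDimensional K (ExteriorAlgebra K M) :=
  Module.Finite.of_basis (finBasis K M).ExteriorAlgebra

theorem finrank_eq_two_pow : finrank K (ExteriorAlgebra K M) = 2 ^ finrank K M := by
  rw [finrank_eq_card_basis (finBasis K M).ExteriorAlgebra, Fintype.card_finset,
    Fintype.card_fin]

end Finrank

end ExteriorAlgebra

def toDualProd (n : ℕ) :
    (Fin n → ℂ) × (Fin n → ℂ) →ₗ[ℂ] Module.Dual ℂ (Fin n → ℂ) × (Fin n → ℂ) :=
  (dotProductEquiv ℂ (Fin n)).toLinearMap.prodMap LinearMap.id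

theorem dOp_eq_spinorRep (n : ℕ) (p : (Fin n → ℂ) × (Fin n → ℂ)) :
    dOp n p = ExteriorAlgebra.spinorRep (toDualProd n p) := by
  have h1 : dotProductEquiv ℂ (Fin n) p.1 = ∑ t, p.1 t • proj t := by
    ext v
    simp [dotProduct]
  have h2 : p.2 = ∑ t, p.2 t • Pi.single t 1 := by
    simp_rw [← Pi.single_smul', smul_eq_mul, mul_one, Finset.univ_sum_single]
  refine LinearMap.ext fun y => ?_
  rw [ExteriorAlgebra.spinorRep_apply, toDualProd, LinearMap.prodMap_apply, LinearEquiv.coe_coe,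
    h1, id_apply, h2]
  simp [dOp, Dop, Xop, Finset.sum_mul, Finset.sum_add_distrib]

theorem dOp_mul_add_mul_swap (n : ℕ) (p q : (Fin n → ℂ) × (Fin n → ℂ)) :
    dOp n p * dOp n q + dOp n q * dOp n p = Bform n p q • 1 := by
  rw [dOp_eq_spinorRep, dOp_eq_spinorRep, ExteriorAlgebra.spinorRep_mul_add_mul_swap]
  congr 1
  simp [toDualProd, Bform, dotProduct, Finset.sum_add_distrib]

theorem dOp_mul_self_eq_zero (n : ℕ) {p : (Fin n → ℂ) × (Fin n → ℂ)}
    (hp : Bform n p p = 0) : dOp n p * dOp n p = 0 := by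
  have h := dOp_mul_add_mul_swap n p p
  rw [hp, zero_smul, ← two_smul ℂ] at h
  exact (smul_eq_zero.1 h).resolve_left two_ne_zero

theorem exists_Bform_eq (n : ℕ) (φ : Module.Dual ℂ ((Fin n → ℂ) × (Fin n → ℂ))) :
    ∃ u, ∀ p, Bform n p u = φ p := by
  have hdual (f : Module.Dual ℂ (Fin n → ℂ)) (v : Fin n → ℂ) :
      f v = ∑ t, v t * f (Pi.single t 1) := by
    conv_lhs => rw [← (dotProductEquiv ℂ (Fin n)).apply_symm_apply f]
    rw [dotProductEquiv_apply_apply]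
    simp [dotProduct, mul_comm]
  refine ⟨(fun t => φ (0, Pi.single t 1), fun t => φ (Pi.single t 1, 0)), fun ⟨β, γ⟩ => ?_⟩
  have hsplit : φ (β, γ) = (φ ∘ₗ inl ℂ _ _) β + (φ ∘ₗ inr ℂ _ _) γ := by simp [← map_add]
  rw [hsplit, hdual, hdual]
  simp [Bform, Finset.sum_add_distrib, mul_comm]

theorem exists_Bform_dual_family {n : ℕ} {ι : Type*} [DecidableEq ι]
    {V : Submodule ℂ ((Fin n → ℂ) × (Fin n → ℂ))} (b : Basis ι ℂ V) :
    ∃ u : ι → (Fin n → ℂ) × (Fin n → ℂ), ∀ i j, Bform n (b i) (u j) = if i = j then 1 else 0 := by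
  have (j : ι) : ∃ u, ∀ i, Bform n (b i) u = if i = j then 1 else 0 := by
    obtain ⟨φ, hφ⟩ := LinearMap.exists_extend (b.coord j)
    obtain ⟨u, hu⟩ := exists_Bform_eq n φ
    refine ⟨u, fun i => ?_⟩
    rw [hu, ← V.subtype_apply, ← LinearMap.comp_apply, hφ, b.coord_apply, b.repr_self,
      Finsupp.single_apply]
  choose u hu using this
  exact ⟨u, fun i j => hu j i⟩

theorem jointKernel_of_maxIsotropic_one_dimensional
    (n : ℕ) (V : Submodule ℂ ((Fin n → ℂ) × (Fin n → ℂ)))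
    (hiso : ∀ p ∈ V, ∀ q ∈ V, Bform n p q = 0)
    (hdim : Module.finrank ℂ ↥V = n) :
    Module.finrank ℂ ↥(⨅ p ∈ V, LinearMap.ker (dOp n p)) = 1 := by
  let b : Basis (Fin n) ℂ V := (finBasis ℂ V).reindex (finCongr hdim)
  obtain ⟨u, hu⟩ := exists_Bform_dual_family b
  have hJ : ⨅ p ∈ V, ker (dOp n p) = ⨅ i, ker (dOp n (b i)) := by
    simpa only [LinearMap.comp_apply, ← dOp_eq_spinorRep] using
      Submodule.iInf_ker_eq_iInf_ker_basis (ExteriorAlgebra.spinorRep ∘ₗ toDualProd n) b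
  have hcount := finrank_eq_two_pow_mul_finrank_iInf_ker (a := fun i => dOp n (b i))
    (b := fun j => dOp n (u j))
    (fun i => dOp_mul_self_eq_zero n (hiso _ (b i).2 _ (b i).2))
    (fun i j _ => by simp only [dOp_mul_add_mul_swap, hiso _ (b i).2 _ (b j).2, zero_smul])
    (fun i j => by rw [dOp_mul_add_mul_swap, hu]; split_ifs <;> simp)
  rw [ExteriorAlgebra.finrank_eq_two_pow, finrank_fin_fun, Fintype.card_fin, ← hJ] at hcount
  exact (Nat.mul_eq_left (pow_ne_zero n two_ne_zero)).1 hcount.symm
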